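/- arXiv:1812.06727 — 2 statements merged into one kernel-verified Lean document; each statement's English description precedes it below -/
import Mathlib

section
/- Let γ ∈ (0,1] and let F : [0,1] → K(ℝ^d) be a bounded, γ-Hölder set-valued map with nonempty compact values. Then for any p > 1/γ and any ξ ∈ F(0), there exists a map f : [0,1] → ℝ^d of finite p-variation such that f(t) ∈ F(t) for all 0 ≤ t ≤ 1, f(0) = ξ, and ‖f‖_{p-var,[0,1]} ≤ C_{γ,p} ‖F‖_γ for a constant C_{γ,p} depending only on γ and p. -/
open Set

noncomputable section

/-- A finite partition of the interval `[a, b]`, given by points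
`a = t 0 ≤ t 1 ≤ ⋯ ≤ t n = b`. -/
structure PVarPartition (a b : ℝ) where
  n : ℕ
  t : ℕ → ℝ
  npos : 0 < n
  first : t 0 = a
  last : t n = b
  mono : ∀ i, i < n → t i ≤ t (i + 1)

variable {E : Type*} [NormedAddCommGroup E]

/-- `∑_i ‖y_{t_{i+1}} - y_{t_i}‖^p` along a partition. -/
def pvarSum (p : ℝ) {a b : ℝ} (y : ℝ → E) (P : PVarPartition a b) : ℝ :=
  ∑ i ∈ Finset.range P.n, ‖y (P.t (i + 1)) - y (P.t i)‖ ^ p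

/-- The set of all `p`-variation sums of `y` over partitions of `[a,b]`. -/
def pvarSums (p a b : ℝ) (y : ℝ → E) : Set ℝ :=
  {r | ∃ P : PVarPartition a b, r = pvarSum p y P}

/-- `y` has finite `p`-variation on `[a,b]`. -/
def FinitePVar (p a b : ℝ) (y : ℝ → E) : Prop :=
  BddAbove (pvarSums p a b y)

/-- The `p`-variation seminorm of `y` on `[a,b]`. -/
def pVar (p a b : ℝ) (y : ℝ → E) : ℝ :=
  sSup (pvarSums p a b y) ^ (1 / p)

abbrev Euc (n : ℕ) := EuclideanSpace ℝ (Fin n)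

end

/-!
Starting from `ξ`, move along dyadic refinements of `[0,1]`: the point attached to the
dyadic interval of length `2⁻ᵐ` containing `t` is sent to a nearest point of `F` at the
left end of the finer interval containing `t`, a move of size at most `‖F‖_γ 2^(-mγ)`. The
level-`m` approximation is a step function with `2ᵐ` jumps, so the increment between two
levels has `p`-variation `≲ 2^(m/p - mγ) ‖F‖_γ`, which is summable because `p > 1/γ`. The
approximations converge pointwise, `p`-variation sums along a fixed partition pass to the
limit, and the limit lies in `F t` because `F t` is closed and the approximations get
arbitrarily close to it.
-/
open Filter Topology Metric

section PVariation

variable {E : Type*} [NormedAddCommGroup E] {p a b : ℝ} {y : ℝ → E}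

namespace PVarPartition

lemma t_le_t (P : PVarPartition a b) {i j : ℕ} (hij : i ≤ j) (hj : j ≤ P.n) : P.t i ≤ P.t j := by
  induction j, hij using Nat.le_induction with
  | base => exact le_rfl
  | succ j _ ih => exact (ih (by omega)).trans (P.mono j (by omega))

lemma t_mem_Icc (P : PVarPartition a b) {i : ℕ} (hi : i ≤ P.n) : P.t i ∈ Icc a b :=
  ⟨by simpa only [P.first] using P.t_le_t (Nat.zero_le i) hi,
    by simpa only [P.last] using P.t_le_t hi le_rfl⟩

end PVarPartition

lemma pvarSum_nonneg (P : PVarPartition a b) : 0 ≤ pvarSum p y P :=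
  Finset.sum_nonneg fun _ _ => Real.rpow_nonneg (norm_nonneg _) p

lemma pvarSum_rpow_add_le (hp : 1 ≤ p) (y z : ℝ → E) (P : PVarPartition a b) :
    pvarSum p (y + z) P ^ (1 / p) ≤ pvarSum p y P ^ (1 / p) + pvarSum p z P ^ (1 / p) := by
  refine le_trans ?_
    (Real.Lp_add_le_of_nonneg _ hp (fun _ _ => norm_nonneg _) fun _ _ => norm_nonneg _)
  refine Real.rpow_le_rpow (pvarSum_nonneg P) (Finset.sum_le_sum fun i _ => ?_) (by positivity)
  refine Real.rpow_le_rpow (norm_nonneg _) ?_ (by linarith)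
  rw [Pi.add_apply, Pi.add_apply, add_sub_add_comm]
  exact norm_add_le _ _

lemma pvarSum_rpow_sum_le {ι : Type*} (hp : 1 ≤ p) (s : Finset ι) (u : ι → ℝ → E)
    (P : PVarPartition a b) :
    pvarSum p (∑ i ∈ s, u i) P ^ (1 / p) ≤ ∑ i ∈ s, pvarSum p (u i) P ^ (1 / p) := by
  have hzero : pvarSum p (0 : ℝ → E) P ^ (1 / p) ≤ 0 := by
    have hp0 : p ≠ 0 := by linarith
    simp [pvarSum, Real.zero_rpow hp0, Real.zero_rpow (inv_ne_zero hp0)]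
  exact Finset.le_sum_of_subadditive (M := ℝ → E) (fun y => pvarSum p y P ^ (1 / p)) hzero
    (pvarSum_rpow_add_le hp · · P) s u

lemma tendsto_pvarSum {ι : Type*} {l : Filter ι} {D : ι → ℝ → E} {f : ℝ → E} (hp : 0 ≤ p)
    (hD : ∀ t ∈ Icc a b, Tendsto (D · t) l (𝓝 (f t))) (P : PVarPartition a b) :
    Tendsto (fun i => pvarSum p (D i) P) l (𝓝 (pvarSum p f P)) := by
  refine tendsto_finsetSum _ fun i hi => ?_
  have hi := Finset.mem_range.mp hi
  exact ((hD _ (P.t_mem_Icc hi)).sub (hD _ (P.t_mem_Icc hi.le))).norm.rpow_const (Or.inr hp)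

/-- A path that only changes where the monotone `ℕ`-valued `φ` jumps has at most
`φ b - φ a` nonzero increments along any partition. -/
lemma pvarSum_le_of_factors_through {φ : ℝ → ℕ} {c : ℝ} (hp : 0 < p)
    (hφ : MonotoneOn φ (Icc a b)) (hy : ∀ s ∈ Icc a b, ∀ t ∈ Icc a b, φ s = φ t → y s = y t)
    (hc : ∀ s ∈ Icc a b, ∀ t ∈ Icc a b, ‖y s - y t‖ ≤ c) (P : PVarPartition a b) :
    pvarSum p y P ≤ ((φ b : ℝ) - φ a) * c ^ p := by
  have hterm : ∀ i ∈ Finset.range P.n, ‖y (P.t (i + 1)) - y (P.t i)‖ ^ p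
      ≤ ((φ (P.t (i + 1)) : ℝ) - φ (P.t i)) * c ^ p := by
    intro i hi
    have hi := Finset.mem_range.mp hi
    have hs := P.t_mem_Icc hi.le
    have ht := P.t_mem_Icc (Nat.succ_le_of_lt hi)
    rcases (hφ hs ht (P.mono i hi)).eq_or_lt with heq | hlt
    · rw [hy _ ht _ hs heq.symm, heq, sub_self, sub_self, norm_zero, Real.zero_rpow hp.ne',
        zero_mul]
    · have hjump : (1 : ℝ) ≤ (φ (P.t (i + 1)) : ℝ) - φ (P.t i) := by
        rw [le_sub_iff_add_le']
        exact_mod_cast hlt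
      calc ‖y (P.t (i + 1)) - y (P.t i)‖ ^ p ≤ c ^ p :=
            Real.rpow_le_rpow (norm_nonneg _) (hc _ ht _ hs) hp.le
        _ ≤ _ := le_mul_of_one_le_left
            (Real.rpow_nonneg ((norm_nonneg _).trans (hc _ ht _ hs)) p) hjump
  calc pvarSum p y P
      ≤ ∑ i ∈ Finset.range P.n, ((φ (P.t (i + 1)) : ℝ) - φ (P.t i)) * c ^ p :=
        Finset.sum_le_sum hterm
    _ = ((φ b : ℝ) - φ a) * c ^ p := by
        rw [← Finset.sum_mul, Finset.sum_range_sub (fun i => (φ (P.t i) : ℝ)), P.last, P.first]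

lemma finitePVar_and_pVar_le {C : ℝ} (hp : 0 < p) (hC : 0 ≤ C)
    (h : ∀ P : PVarPartition a b, pvarSum p y P ^ (1 / p) ≤ C) :
    FinitePVar p a b y ∧ pVar p a b y ≤ C := by
  have hsums : ∀ r ∈ pvarSums p a b y, r ≤ C ^ p := by
    rintro _ ⟨P, rfl⟩
    rw [← Real.rpow_inv_le_iff_of_pos (pvarSum_nonneg P) hC hp, ← one_div]
    exact h P
  have hsup : 0 ≤ sSup (pvarSums p a b y) := by
    refine Real.sSup_nonneg ?_
    rintro _ ⟨P, rfl⟩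
    exact pvarSum_nonneg P
  refine ⟨⟨C ^ p, hsums⟩, ?_⟩
  rw [pVar, one_div, Real.rpow_inv_le_iff_of_pos hsup hC hp]
  exact Real.sSup_le hsums (by positivity)

end PVariation

section Dyadic

lemma floor_two_pow_succ_mul_div_two (m : ℕ) (t : ℝ) :
    ⌊2 ^ (m + 1) * t⌋₊ / 2 = ⌊2 ^ m * t⌋₊ := by
  rw [← Nat.floor_div_ofNat]
  congr 1
  ring

lemma floor_two_pow_mul_eq_of_succ {m : ℕ} {s t : ℝ}
    (h : ⌊2 ^ (m + 1) * s⌋₊ = ⌊2 ^ (m + 1) * t⌋₊) : ⌊2 ^ m * s⌋₊ = ⌊2 ^ m * t⌋₊ := by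
  rw [← floor_two_pow_succ_mul_div_two, h, floor_two_pow_succ_mul_div_two]

noncomputable def dyadicFloor (m : ℕ) (t : ℝ) : ℝ := ⌊2 ^ m * t⌋₊ / 2 ^ m

variable {m : ℕ} {t : ℝ}

@[simp]
lemma dyadicFloor_zero_right (m : ℕ) : dyadicFloor m 0 = 0 := by
  simp [dyadicFloor]

lemma dyadicFloor_le (ht : 0 ≤ t) : dyadicFloor m t ≤ t := by
  rw [dyadicFloor, div_le_iff₀ (by positivity), mul_comm]
  exact Nat.floor_le (by positivity)

lemma sub_lt_dyadicFloor (t : ℝ) : t - (1 / 2) ^ m < dyadicFloor m t := by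
  rw [dyadicFloor, lt_div_iff₀ (by positivity), sub_mul, one_div_pow,
    one_div_mul_cancel (by positivity), mul_comm, sub_lt_iff_lt_add]
  exact Nat.lt_floor_add_one _

lemma dyadicFloor_mem_Icc (ht : t ∈ Icc (0 : ℝ) 1) : dyadicFloor m t ∈ Icc (0 : ℝ) 1 :=
  ⟨by unfold dyadicFloor; positivity, (dyadicFloor_le ht.1).trans ht.2⟩

lemma abs_dyadicFloor_sub_le (ht : 0 ≤ t) : |dyadicFloor m t - t| ≤ (1 / 2) ^ m := by
  rw [abs_sub_le_iff]
  constructor <;> linarith [dyadicFloor_le (m := m) ht, sub_lt_dyadicFloor (m := m) t]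

lemma abs_dyadicFloor_sub_succ_le (ht : 0 ≤ t) :
    |dyadicFloor m t - dyadicFloor (m + 1) t| ≤ (1 / 2) ^ m := by
  have hpow : (1 / 2 : ℝ) ^ (m + 1) ≤ (1 / 2) ^ m := pow_le_pow_of_le_one (by norm_num)
    (by norm_num) m.le_succ
  rw [abs_sub_le_iff]
  constructor <;> linarith [dyadicFloor_le (m := m) ht, sub_lt_dyadicFloor (m := m) t,
    dyadicFloor_le (m := m + 1) ht, sub_lt_dyadicFloor (m := m + 1) t]

end Dyadic

section DyadicPVariation

variable {E : Type*} [NormedAddCommGroup E] {p c : ℝ} {y : ℝ → E}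

lemma pvarSum_rpow_le_of_factors_through_dyadic (hp : 0 < p) (m : ℕ)
    (hy : ∀ s t, ⌊2 ^ m * s⌋₊ = ⌊2 ^ m * t⌋₊ → y s = y t)
    (hc : ∀ s ∈ Icc (0 : ℝ) 1, ∀ t ∈ Icc (0 : ℝ) 1, ‖y s - y t‖ ≤ c) (P : PVarPartition 0 1) :
    pvarSum p y P ^ (1 / p) ≤ (2 ^ (1 / p)) ^ m * c := by
  have hc0 : 0 ≤ c := (norm_nonneg _).trans (hc 0 ⟨le_rfl, zero_le_one⟩ 0 ⟨le_rfl, zero_le_one⟩)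
  have hmono : MonotoneOn (fun t : ℝ => ⌊2 ^ m * t⌋₊) (Icc 0 1) := fun s _ t _ hst =>
    Nat.floor_le_floor (by gcongr)
  have h := pvarSum_le_of_factors_through hp hmono (fun s _ t _ => hy s t) hc P
  have hjumps : ((⌊(2 : ℝ) ^ m * 1⌋₊ : ℕ) : ℝ) - ⌊(2 : ℝ) ^ m * 0⌋₊ = 2 ^ m := by
    rw [mul_one, mul_zero, Nat.floor_zero, ← Nat.cast_ofNat, ← Nat.cast_pow, Nat.floor_natCast]
    simp
  rw [hjumps] at h
  calc pvarSum p y P ^ (1 / p) ≤ (2 ^ m * c ^ p) ^ (1 / p) :=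
        Real.rpow_le_rpow (pvarSum_nonneg P) h (by positivity)
    _ = (2 ^ (1 / p)) ^ m * c := by
        rw [Real.mul_rpow (by positivity) (by positivity), ← Real.rpow_pow_comm zero_le_two,
          one_div, Real.rpow_rpow_inv hc0 hp.ne']

lemma pvarSum_rpow_sub_le_of_dyadic {r : ℝ} {D : ℕ → ℝ → E} (hp : 0 < p)
    (hfac : ∀ m s t, ⌊2 ^ m * s⌋₊ = ⌊2 ^ m * t⌋₊ → D m s = D m t)
    (hstep : ∀ t ∈ Icc (0 : ℝ) 1, ∀ m, dist (D m t) (D (m + 1) t) ≤ c * r ^ m) (m : ℕ)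
    (P : PVarPartition 0 1) :
    pvarSum p (D (m + 1) - D m) P ^ (1 / p) ≤ 2 ^ (1 / p) * (2 * c) * (2 ^ (1 / p) * r) ^ m := by
  have hsize : ∀ t ∈ Icc (0 : ℝ) 1, ‖(D (m + 1) - D m) t‖ ≤ c * r ^ m := fun t ht => by
    rw [Pi.sub_apply, ← dist_eq_norm, dist_comm]
    exact hstep t ht m
  have hosc : ∀ s ∈ Icc (0 : ℝ) 1, ∀ t ∈ Icc (0 : ℝ) 1,
      ‖(D (m + 1) - D m) s - (D (m + 1) - D m) t‖ ≤ 2 * c * r ^ m := fun s hs t ht =>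
    calc ‖(D (m + 1) - D m) s - (D (m + 1) - D m) t‖
        ≤ ‖(D (m + 1) - D m) s‖ + ‖(D (m + 1) - D m) t‖ := norm_sub_le _ _
      _ ≤ c * r ^ m + c * r ^ m := add_le_add (hsize s hs) (hsize t ht)
      _ = 2 * c * r ^ m := by ring
  have hfac' : ∀ s t, ⌊2 ^ (m + 1) * s⌋₊ = ⌊2 ^ (m + 1) * t⌋₊ →
      (D (m + 1) - D m) s = (D (m + 1) - D m) t := fun s t h => by
    simp only [Pi.sub_apply, hfac _ _ _ h, hfac _ _ _ (floor_two_pow_mul_eq_of_succ h)]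
  refine (pvarSum_rpow_le_of_factors_through_dyadic hp (m + 1) hfac' hosc P).trans_eq ?_
  rw [pow_succ, mul_pow]
  ring

lemma pvarSum_rpow_le_of_dyadic_approx {r : ℝ} {ξ : E} {D : ℕ → ℝ → E} {f : ℝ → E}
    (hp : 1 ≤ p) (hr : 0 ≤ r) (hθ : 2 ^ (1 / p) * r < 1)
    (hfac : ∀ m s t, ⌊2 ^ m * s⌋₊ = ⌊2 ^ m * t⌋₊ → D m s = D m t)
    (h0 : ∀ t ∈ Icc (0 : ℝ) 1, dist ξ (D 0 t) ≤ c)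
    (hstep : ∀ t ∈ Icc (0 : ℝ) 1, ∀ m, dist (D m t) (D (m + 1) t) ≤ c * r ^ m)
    (hlim : ∀ t ∈ Icc (0 : ℝ) 1, Tendsto (D · t) atTop (𝓝 (f t))) (P : PVarPartition 0 1) :
    pvarSum p f P ^ (1 / p) ≤ 2 * c * (1 + 2 ^ (1 / p) / (1 - 2 ^ (1 / p) * r)) := by
  set θ := (2 : ℝ) ^ (1 / p) * r
  have hp0 : 0 < p := by linarith
  have hosc0 : ∀ s ∈ Icc (0 : ℝ) 1, ∀ t ∈ Icc (0 : ℝ) 1, ‖D 0 s - D 0 t‖ ≤ 2 * c :=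
    fun s hs t ht => by
      rw [← dist_eq_norm]
      linarith [dist_triangle (D 0 s) ξ (D 0 t), dist_comm (D 0 s) ξ, h0 s hs, h0 t ht]
  have hD0 : pvarSum p (D 0) P ^ (1 / p) ≤ 2 * c :=
    (pvarSum_rpow_le_of_factors_through_dyadic hp0 0 (hfac 0) hosc0 P).trans_eq (by simp)
  have hDM : ∀ M, pvarSum p (D M) P ^ (1 / p) ≤ 2 * c * (1 + 2 ^ (1 / p) / (1 - θ)) := by
    intro M
    have hsplit : D M = D 0 + ∑ m ∈ Finset.range M, (D (m + 1) - D m) := by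
      rw [Finset.sum_range_sub]
      abel
    calc pvarSum p (D M) P ^ (1 / p)
        ≤ pvarSum p (D 0) P ^ (1 / p)
          + ∑ m ∈ Finset.range M, pvarSum p (D (m + 1) - D m) P ^ (1 / p) := by
          rw [hsplit]
          exact (pvarSum_rpow_add_le hp (D 0) _ P).trans (add_le_add le_rfl
            (pvarSum_rpow_sum_le hp (Finset.range M) (fun m => D (m + 1) - D m) P))
      _ ≤ 2 * c + ∑ m ∈ Finset.range M, 2 ^ (1 / p) * (2 * c) * θ ^ m :=
          add_le_add hD0 (Finset.sum_le_sum fun m _ =>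
            pvarSum_rpow_sub_le_of_dyadic hp0 hfac hstep m P)
      _ ≤ 2 * c + 2 ^ (1 / p) * (2 * c) * (1 / (1 - θ)) := by
          have hc : 0 ≤ c := dist_nonneg.trans (h0 0 ⟨le_rfl, zero_le_one⟩)
          rw [← Finset.mul_sum]
          gcongr
          simpa using geom_sum_Ico_le_of_lt_one (m := 0) (n := M) (by positivity) hθ
      _ = 2 * c * (1 + 2 ^ (1 / p) / (1 - θ)) := by ring
  exact le_of_tendsto' ((tendsto_pvarSum hp0.le hlim P).rpow_const (Or.inr (by positivity))) hDM

end DyadicPVariation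

section Transition

variable {ι X : Type*}

def IsHausdorffTransition [PseudoMetricSpace X] (F : ι → Set X) (I : Set ι)
    (σ : ι → ι → X → X) : Prop :=
  ∀ i ∈ I, ∀ j ∈ I, ∀ x ∈ F i, σ i j x ∈ F j ∧ dist x (σ i j x) ≤ hausdorffDist (F i) (F j)

lemma exists_isHausdorffTransition [PseudoMetricSpace X] {F : ι → Set X} {I : Set ι}
    (hF : ∀ i ∈ I, IsCompact (F i)) (hne : ∀ i ∈ I, (F i).Nonempty) :
    ∃ σ, IsHausdorffTransition F I σ := by
  have h : ∀ i j (x : X), ∃ y, i ∈ I → j ∈ I → x ∈ F i →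
      y ∈ F j ∧ dist x y ≤ hausdorffDist (F i) (F j) := by
    intro i j x
    by_cases hx : i ∈ I ∧ j ∈ I ∧ x ∈ F i
    · obtain ⟨hi, hj, hx⟩ := hx
      obtain ⟨y, hy, hxy⟩ := (hF j hj).exists_infDist_eq_dist (hne j hj) x
      have hfin : hausdorffEDist (F i) (F j) ≠ ⊤ := hausdorffEDist_ne_top_of_nonempty_of_bounded
        ⟨x, hx⟩ (hne j hj) (hF i hi).isBounded (hF j hj).isBounded
      exact ⟨y, fun _ _ _ => ⟨hy, hxy ▸ infDist_le_hausdorffDist_of_mem hx hfin⟩⟩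
    · exact ⟨x, fun hi hj hx' => absurd ⟨hi, hj, hx'⟩ hx⟩
  choose σ hσ using h
  exact ⟨σ, fun i hi j hj x hx => hσ i j x hi hj hx⟩

lemma IsHausdorffTransition.apply_self [MetricSpace X] {F : ι → Set X} {I : Set ι}
    {σ : ι → ι → X → X} (hσ : IsHausdorffTransition F I σ) {i : ι} (hi : i ∈ I) {x : X}
    (hx : x ∈ F i) : σ i i x = x :=
  (dist_le_zero.mp ((hσ i hi i hi x hx).2.trans_eq hausdorffDist_self_zero)).symm

end Transition

section DyadicChain

variable {X : Type*}

noncomputable def dyadicChain (σ : ℝ → ℝ → X → X) (ξ : X) : ℕ → ℝ → X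
  | 0, t => σ 0 (dyadicFloor 0 t) ξ
  | m + 1, t => σ (dyadicFloor m t) (dyadicFloor (m + 1) t) (dyadicChain σ ξ m t)

lemma dyadicChain_congr (σ : ℝ → ℝ → X → X) (ξ : X) {m : ℕ} {s t : ℝ}
    (h : ⌊2 ^ m * s⌋₊ = ⌊2 ^ m * t⌋₊) : dyadicChain σ ξ m s = dyadicChain σ ξ m t := by
  induction m with
  | zero => simp only [dyadicChain, dyadicFloor, h]
  | succ m ih =>
    have h' := floor_two_pow_mul_eq_of_succ h
    simp only [dyadicChain, dyadicFloor, h, h', ih h']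

variable [MetricSpace X] {F : ℝ → Set X} {σ : ℝ → ℝ → X → X} {ξ : X} {t : ℝ}

lemma dyadicChain_mem (hσ : IsHausdorffTransition F (Icc 0 1) σ) (hξ : ξ ∈ F 0)
    (ht : t ∈ Icc (0 : ℝ) 1) : ∀ m, dyadicChain σ ξ m t ∈ F (dyadicFloor m t)
  | 0 => (hσ 0 ⟨le_rfl, zero_le_one⟩ _ (dyadicFloor_mem_Icc ht) ξ hξ).1
  | m + 1 => (hσ _ (dyadicFloor_mem_Icc ht) _ (dyadicFloor_mem_Icc ht) _
      (dyadicChain_mem hσ hξ ht m)).1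

lemma dyadicChain_zero_right (hσ : IsHausdorffTransition F (Icc 0 1) σ) (hξ : ξ ∈ F 0) :
    ∀ m, dyadicChain σ ξ m 0 = ξ
  | 0 => by simpa [dyadicChain] using hσ.apply_self ⟨le_rfl, zero_le_one⟩ hξ
  | m + 1 => by
    simpa [dyadicChain, dyadicChain_zero_right hσ hξ m] using
      hσ.apply_self ⟨le_rfl, zero_le_one⟩ hξ

lemma limUnder_dyadicChain_zero_right [Nonempty X] (hσ : IsHausdorffTransition F (Icc 0 1) σ)
    (hξ : ξ ∈ F 0) : limUnder atTop (dyadicChain σ ξ · 0) = ξ := by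
  simp only [dyadicChain_zero_right hσ hξ]
  exact tendsto_nhds_unique (tendsto_nhds_limUnder ⟨ξ, tendsto_const_nhds⟩) tendsto_const_nhds

end DyadicChain

section HolderChain

variable {X : Type*} [MetricSpace X] {F : ℝ → Set X} {σ : ℝ → ℝ → X → X} {ξ : X} {K γ t : ℝ}

lemma hausdorffDist_le_of_abs_sub_le_half_pow (hK : 0 ≤ K) (hγ : 0 ≤ γ)
    (hF : ∀ s ∈ Icc (0 : ℝ) 1, ∀ t ∈ Icc (0 : ℝ) 1, hausdorffDist (F s) (F t) ≤ K * |s - t| ^ γ)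
    {s t : ℝ} (hs : s ∈ Icc (0 : ℝ) 1) (ht : t ∈ Icc (0 : ℝ) 1) {m : ℕ}
    (hst : |s - t| ≤ (1 / 2) ^ m) : hausdorffDist (F s) (F t) ≤ K * ((1 / 2) ^ γ) ^ m := by
  refine (hF s hs t ht).trans ?_
  rw [Real.rpow_pow_comm (by norm_num)]
  gcongr

lemma dist_dyadicChain_zero_le (hσ : IsHausdorffTransition F (Icc 0 1) σ) (hξ : ξ ∈ F 0)
    (hK : 0 ≤ K) (hγ : 0 ≤ γ)
    (hF : ∀ s ∈ Icc (0 : ℝ) 1, ∀ t ∈ Icc (0 : ℝ) 1, hausdorffDist (F s) (F t) ≤ K * |s - t| ^ γ)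
    (ht : t ∈ Icc (0 : ℝ) 1) : dist ξ (dyadicChain σ ξ 0 t) ≤ K := by
  have h0 : (0 : ℝ) ∈ Icc 0 1 := ⟨le_rfl, zero_le_one⟩
  have hπ := dyadicFloor_mem_Icc (m := 0) ht
  have hdist : |0 - dyadicFloor 0 t| ≤ (1 / 2) ^ 0 := by
    rw [zero_sub, abs_neg, abs_of_nonneg hπ.1, pow_zero]
    exact hπ.2
  simpa [dyadicChain] using (hσ 0 h0 _ hπ ξ hξ).2.trans
    (hausdorffDist_le_of_abs_sub_le_half_pow hK hγ hF h0 hπ hdist)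

lemma dist_dyadicChain_succ_le (hσ : IsHausdorffTransition F (Icc 0 1) σ) (hξ : ξ ∈ F 0)
    (hK : 0 ≤ K) (hγ : 0 ≤ γ)
    (hF : ∀ s ∈ Icc (0 : ℝ) 1, ∀ t ∈ Icc (0 : ℝ) 1, hausdorffDist (F s) (F t) ≤ K * |s - t| ^ γ)
    (ht : t ∈ Icc (0 : ℝ) 1) (m : ℕ) :
    dist (dyadicChain σ ξ m t) (dyadicChain σ ξ (m + 1) t) ≤ K * ((1 / 2) ^ γ) ^ m :=
  (hσ _ (dyadicFloor_mem_Icc ht) _ (dyadicFloor_mem_Icc ht) _ (dyadicChain_mem hσ hξ ht m)).2.trans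
    (hausdorffDist_le_of_abs_sub_le_half_pow hK hγ hF (dyadicFloor_mem_Icc ht)
      (dyadicFloor_mem_Icc ht) (abs_dyadicFloor_sub_succ_le ht.1))

lemma tendsto_dyadicChain [CompleteSpace X] [Nonempty X] (hσ : IsHausdorffTransition F (Icc 0 1) σ)
    (hξ : ξ ∈ F 0) (hK : 0 ≤ K) (hγ : 0 < γ)
    (hF : ∀ s ∈ Icc (0 : ℝ) 1, ∀ t ∈ Icc (0 : ℝ) 1, hausdorffDist (F s) (F t) ≤ K * |s - t| ^ γ)
    (ht : t ∈ Icc (0 : ℝ) 1) :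
    Tendsto (dyadicChain σ ξ · t) atTop (𝓝 (limUnder atTop (dyadicChain σ ξ · t))) :=
  tendsto_nhds_limUnder <| cauchySeq_tendsto_of_complete <|
    cauchySeq_of_le_geometric _ K (Real.rpow_lt_one (by norm_num) (by norm_num) hγ)
      (dist_dyadicChain_succ_le hσ hξ hK hγ.le hF ht)

lemma mem_of_tendsto_dyadicChain (hσ : IsHausdorffTransition F (Icc 0 1) σ) (hξ : ξ ∈ F 0)
    (hK : 0 ≤ K) (hγ : 0 < γ)
    (hF : ∀ s ∈ Icc (0 : ℝ) 1, ∀ t ∈ Icc (0 : ℝ) 1, hausdorffDist (F s) (F t) ≤ K * |s - t| ^ γ)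
    (hcl : IsClosed (F t)) (ht : t ∈ Icc (0 : ℝ) 1) {y : X}
    (hlim : Tendsto (dyadicChain σ ξ · t) atTop (𝓝 y)) : y ∈ F t := by
  set z := fun m => σ (dyadicFloor m t) t (dyadicChain σ ξ m t)
  have hz : ∀ m, z m ∈ F t ∧ dist (dyadicChain σ ξ m t) (z m) ≤ K * ((1 / 2) ^ γ) ^ m := by
    intro m
    have h := hσ _ (dyadicFloor_mem_Icc ht) t ht _ (dyadicChain_mem hσ hξ ht m)
    exact ⟨h.1, h.2.trans (hausdorffDist_le_of_abs_sub_le_half_pow hK hγ.le hF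
      (dyadicFloor_mem_Icc ht) ht (abs_dyadicFloor_sub_le ht.1))⟩
  have hr : (1 / 2 : ℝ) ^ γ < 1 := Real.rpow_lt_one (by norm_num) (by norm_num) hγ
  have hbound : Tendsto (fun m => K * ((1 / 2 : ℝ) ^ γ) ^ m) atTop (𝓝 0) := by
    simpa using (tendsto_pow_atTop_nhds_zero_of_lt_one (by positivity) hr).const_mul K
  refine hcl.mem_of_tendsto (tendsto_of_tendsto_of_dist hlim ?_) (Eventually.of_forall (hz · |>.1))
  exact squeeze_zero (fun _ => dist_nonneg) (hz · |>.2) hbound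

end HolderChain

/-- **A selection result.**
Let `γ ∈ (0,1]` and `F : [0,1] → K(ℝ^d)` be a bounded, `γ`-Hölder (for the Hausdorff
distance, with constant `KF`) set-valued map with nonempty compact values.  Then for
any `p > 1/γ` and any `ξ ∈ F(0)` there is a selection `f` of `F` with `f 0 = ξ`, of
finite `p`-variation, with `‖f‖_{p-var,[0,1]} ≤ C_{γ,p} · KF` for a constant `C_{γ,p}`
depending only on `γ` and `p`. -/
theorem selection_with_finite_p_variation
    (γ p : ℝ) (hγ : 0 < γ ∧ γ ≤ 1) (hp : 1 / γ < p) :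
    ∃ C : ℝ, 0 ≤ C ∧
      ∀ (d : ℕ) (F : ℝ → Set (Euc d)),
        (∀ t ∈ Icc (0:ℝ) 1, (F t).Nonempty) →
        (∀ t ∈ Icc (0:ℝ) 1, IsCompact (F t)) →
        (∃ M : ℝ, ∀ t ∈ Icc (0:ℝ) 1, ∀ a ∈ F t, ‖a‖ ≤ M) →
        ∀ KF : ℝ, 0 ≤ KF →
        (∀ s ∈ Icc (0:ℝ) 1, ∀ t ∈ Icc (0:ℝ) 1,
          Metric.hausdorffDist (F s) (F t) ≤ KF * |s - t| ^ γ) →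
        ∀ ξ ∈ F 0,
          ∃ f : ℝ → Euc d,
            (∀ t ∈ Icc (0:ℝ) 1, f t ∈ F t) ∧ f 0 = ξ ∧
            FinitePVar p 0 1 f ∧ pVar p 0 1 f ≤ C * KF := by
  obtain ⟨hγ0, hγ1⟩ := hγ
  have hp1 : 1 ≤ p := (one_le_one_div hγ0 hγ1).trans hp.le
  have hθ : 2 ^ (1 / p) * (1 / 2 : ℝ) ^ γ < 1 := by
    rw [Real.div_rpow zero_le_one zero_le_two, Real.one_rpow, mul_one_div,
      div_lt_one (by positivity)]
    exact Real.rpow_lt_rpow_of_exponent_lt one_lt_two ((one_div_lt hγ0 (by linarith)).mp hp)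
  set C := 2 * (1 + 2 ^ (1 / p) / (1 - 2 ^ (1 / p) * (1 / 2 : ℝ) ^ γ)) with hC_def
  have hC : 0 ≤ C := by
    have := div_nonneg (by positivity : (0 : ℝ) ≤ 2 ^ (1 / p)) (sub_nonneg.mpr hθ.le)
    positivity
  refine ⟨C, hC, fun d F hne hcpt _ KF hKF hF ξ hξ => ?_⟩
  obtain ⟨σ, hσ⟩ := exists_isHausdorffTransition hcpt hne
  have hlim := fun t (ht : t ∈ Icc (0 : ℝ) 1) => tendsto_dyadicChain hσ hξ hKF hγ0 hF ht
  refine ⟨fun t => limUnder atTop (dyadicChain σ ξ · t), fun t ht =>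
    mem_of_tendsto_dyadicChain hσ hξ hKF hγ0 hF (hcpt t ht).isClosed ht (hlim t ht),
    limUnder_dyadicChain_zero_right hσ hξ,
    finitePVar_and_pVar_le (by linarith) (mul_nonneg hC hKF) fun P => ?_⟩
  have h0 := fun t (ht : t ∈ Icc (0 : ℝ) 1) => dist_dyadicChain_zero_le hσ hξ hKF hγ0.le hF ht
  have hstep := fun t (ht : t ∈ Icc (0 : ℝ) 1) => dist_dyadicChain_succ_le hσ hξ hKF hγ0.le hF ht
  have hfac := fun m (s t : ℝ) (h : ⌊2 ^ m * s⌋₊ = ⌊2 ^ m * t⌋₊) => dyadicChain_congr σ ξ h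
  exact (pvarSum_rpow_le_of_dyadic_approx hp1 (by positivity) hθ hfac h0 hstep hlim P).trans_eq
    (by rw [hC_def]; ring)
end

section
/- Let a ≤ b and let μ : Δ_{a,b} → ℝ^d, where Δ_{a,b} = {(s,t) : a ≤ s ≤ t ≤ b}. Suppose there exist positive exponents α₁, α₂ with α₁ + α₂ > 1 and controls ω₁, ω₂ on [a,b], with ω₂ regular, such that |μ_{s,t} − μ_{s,u} − μ_{u,t}| ≤ ω₁(s,u)^{α₁} ω₂(u,t)^{α₂} for all a ≤ s ≤ u ≤ t ≤ b. Then for every interval [s,t] ⊂ [a,b], the sums μ_π = Σ_i μ_{s_i, s_{i+1}} over finite partitions π = {s_i} of [s,t] converge to a limit I_s^t(μ) as the mesh of π tends to 0, and |I_s^t(μ) − μ_{s,t}| ≤ C ω₁(s, t⁻)^{α₁} ω₂(s,t)^{α₂} for a positive constant C depending only on α₁ and α₂, where ω₁(s, t⁻) denotes the left limit in t of ω₁(s, ·). -/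
open Set

noncomputable section

/-- A finite partition of the interval `[a, b]`, given by points
`a = t 0 ≤ t 1 ≤ ⋯ ≤ t n = b`. -/
structure SewPartition (a b : ℝ) where
  n : ℕ
  t : ℕ → ℝ
  npos : 0 < n
  first : t 0 = a
  last : t n = b
  mono : ∀ i, i < n → t i ≤ t (i + 1)

/-- The partition has mesh `< δ`. -/
def SewPartition.fine {a b : ℝ} (P : SewPartition a b) (δ : ℝ) : Prop :=
  ∀ i < P.n, P.t (i + 1) - P.t i < δ

/-- `ω` is a control on `[a,b]`: it vanishes on the diagonal, is non-negative,
non-increasing in its first argument and non-decreasing in its second one,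
and super-additive. -/
def IsControl (a b : ℝ) (ω : ℝ → ℝ → ℝ) : Prop :=
  (∀ s ∈ Icc a b, ω s s = 0) ∧
  (∀ s t : ℝ, a ≤ s → s ≤ t → t ≤ b → 0 ≤ ω s t) ∧
  (∀ s' s t t' : ℝ, a ≤ s' → s' ≤ s → s ≤ t → t ≤ t' → t' ≤ b → ω s t ≤ ω s' t') ∧
  (∀ s u t : ℝ, a ≤ s → s ≤ u → u ≤ t → t ≤ b → ω s u + ω u t ≤ ω s t)

/-- A control is regular if it is continuous in a neighbourhood of the diagonal. -/
def IsRegularControl (a b : ℝ) (ω : ℝ → ℝ → ℝ) : Prop :=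
  ∃ ε > 0, ContinuousOn (fun q : ℝ × ℝ => ω q.1 q.2)
    {q : ℝ × ℝ | a ≤ q.1 ∧ q.1 ≤ q.2 ∧ q.2 ≤ b ∧ q.2 - q.1 < ε}

end

/-!
With `γ = α₁ + α₂ > 1` and `θ = α₁ / γ`, Hölder's inequality makes `ω = ω₁^θ ω₂^(1-θ)` a control,
and the hypothesis bounds the defect `μ_{s,t} - μ_{s,u} - μ_{u,t}` by `ω(s,t)^γ`. Young's
point-removal argument then gives the maximal inequality `‖μ_π - μ_{s,t}‖ ≤ C ω(s,t)^γ` with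
`C = ∑ (2/k)^γ`. Applied on each interval of a partition `π`, to the partition `π'` clamped into
it, this bounds `‖μ_π - μ_{π'}‖` by `2 C max_i ω(s_i, s_{i+1})^(γ-1) ω(s,t)`, which vanishes with
the mesh because `ω₂` is regular; so the Riemann sums are Cauchy. Finally, the limit is additive
over intervals, and splitting `[s,t]` at `u ↑ t` trades `ω₁(s,t)` for its left limit, since all
terms attached to `[u,t]` carry a factor `ω₂(u,t)^α₂ → 0`.
-/

open Filter Topology

theorem Real.rpow_mul_rpow_add_rpow_mul_rpow_le {θ : ℝ} (hθ₀ : 0 < θ) (hθ₁ : θ < 1)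
    {A B C D : ℝ} (hA : 0 ≤ A) (hB : 0 ≤ B) (hC : 0 ≤ C) (hD : 0 ≤ D) :
    A ^ θ * B ^ (1 - θ) + C ^ θ * D ^ (1 - θ) ≤ (A + C) ^ θ * (B + D) ^ (1 - θ) := by
  rcases (add_nonneg hA hC).eq_or_lt with hAC | hAC
  · obtain ⟨rfl, rfl⟩ : A = 0 ∧ C = 0 := ⟨by linarith, by linarith⟩
    simp [Real.zero_rpow hθ₀.ne']
  rcases (add_nonneg hB hD).eq_or_lt with hBD | hBD
  · obtain ⟨rfl, rfl⟩ : B = 0 ∧ D = 0 := ⟨by linarith, by linarith⟩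
    simp [Real.zero_rpow (sub_pos.2 hθ₁).ne']
  -- weighted AM-GM after normalising both sums to `1`
  have amgm : ∀ x y : ℝ, 0 ≤ x → 0 ≤ y → x ^ θ * y ^ (1 - θ) ≤
      (θ * (x / (A + C)) + (1 - θ) * (y / (B + D))) * ((A + C) ^ θ * (B + D) ^ (1 - θ)) := by
    intro x y hx hy
    calc x ^ θ * y ^ (1 - θ)
        = (x / (A + C)) ^ θ * (y / (B + D)) ^ (1 - θ) * ((A + C) ^ θ * (B + D) ^ (1 - θ)) := by
          rw [Real.div_rpow hx hAC.le, Real.div_rpow hy hBD.le]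
          field_simp
      _ ≤ _ := by
          gcongr
          exact Real.geom_mean_le_arith_mean2_weighted hθ₀.le (sub_pos.2 hθ₁).le
            (by positivity) (by positivity) (by ring)
  calc A ^ θ * B ^ (1 - θ) + C ^ θ * D ^ (1 - θ)
      ≤ (θ * (A / (A + C)) + (1 - θ) * (B / (B + D))) * ((A + C) ^ θ * (B + D) ^ (1 - θ))
        + (θ * (C / (A + C)) + (1 - θ) * (D / (B + D))) * ((A + C) ^ θ * (B + D) ^ (1 - θ)) :=
        add_le_add (amgm A B hA hB) (amgm C D hC hD)
    _ = (A + C) ^ θ * (B + D) ^ (1 - θ) := by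
        field_simp
        ring

namespace IsControl

variable {a b : ℝ} {ω ω₁ ω₂ : ℝ → ℝ → ℝ}

theorem diag (h : IsControl a b ω) {s : ℝ} (ha : a ≤ s) (hb : s ≤ b) : ω s s = 0 :=
  h.1 s ⟨ha, hb⟩

theorem nonneg (h : IsControl a b ω) {s t : ℝ} (ha : a ≤ s) (hst : s ≤ t) (hb : t ≤ b) :
    0 ≤ ω s t :=
  h.2.1 s t ha hst hb

theorem mono (h : IsControl a b ω) {s' s t t' : ℝ} (ha : a ≤ s') (hs : s' ≤ s) (hst : s ≤ t)
    (ht : t ≤ t') (hb : t' ≤ b) : ω s t ≤ ω s' t' :=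
  h.2.2.1 s' s t t' ha hs hst ht hb

theorem add_le (h : IsControl a b ω) {s u t : ℝ} (ha : a ≤ s) (hsu : s ≤ u) (hut : u ≤ t)
    (hb : t ≤ b) : ω s u + ω u t ≤ ω s t :=
  h.2.2.2 s u t ha hsu hut hb

theorem subinterval (h : IsControl a b ω) {s t : ℝ} (ha : a ≤ s) (hb : t ≤ b) :
    IsControl s t ω :=
  ⟨fun _ hx => h.diag (ha.trans hx.1) (hx.2.trans hb),
    fun _ _ hs hst ht => h.nonneg (ha.trans hs) hst (ht.trans hb),
    fun _ _ _ _ hs hs' hst ht ht' => h.mono (ha.trans hs) hs' hst ht (ht'.trans hb),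
    fun _ _ _ hs hsu hut ht => h.add_le (ha.trans hs) hsu hut (ht.trans hb)⟩

theorem geomMean (h₁ : IsControl a b ω₁) (h₂ : IsControl a b ω₂) {θ : ℝ} (hθ₀ : 0 < θ)
    (hθ₁ : θ < 1) : IsControl a b (fun s t => ω₁ s t ^ θ * ω₂ s t ^ (1 - θ)) := by
  refine ⟨fun s hs => ?_, fun s t ha hst hb => ?_, fun s' s t t' ha hs hst ht hb => ?_,
    fun s u t ha hsu hut hb => ?_⟩
  · simp [h₁.diag hs.1 hs.2, Real.zero_rpow hθ₀.ne']
  · have := h₁.nonneg ha hst hb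
    have := h₂.nonneg ha hst hb
    positivity
  · have := h₁.nonneg (ha.trans hs) hst (ht.trans hb)
    have := h₂.nonneg (ha.trans hs) hst (ht.trans hb)
    have := h₁.nonneg ha (hs.trans (hst.trans ht)) hb
    beta_reduce
    gcongr
    · exact h₁.mono ha hs hst ht hb
    · exact h₂.mono ha hs hst ht hb
  · have hsu₁ := h₁.nonneg ha hsu (hut.trans hb)
    have hsu₂ := h₂.nonneg ha hsu (hut.trans hb)
    have hut₁ := h₁.nonneg (ha.trans hsu) hut hb
    have hut₂ := h₂.nonneg (ha.trans hsu) hut hb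
    calc ω₁ s u ^ θ * ω₂ s u ^ (1 - θ) + ω₁ u t ^ θ * ω₂ u t ^ (1 - θ)
        ≤ (ω₁ s u + ω₁ u t) ^ θ * (ω₂ s u + ω₂ u t) ^ (1 - θ) :=
          Real.rpow_mul_rpow_add_rpow_mul_rpow_le hθ₀ hθ₁ hsu₁ hsu₂ hut₁ hut₂
      _ ≤ ω₁ s t ^ θ * ω₂ s t ^ (1 - θ) := by
          have := h₁.nonneg ha (hsu.trans hut) hb
          gcongr
          · exact h₁.add_le ha hsu hut hb
          · exact h₂.add_le ha hsu hut hb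

end IsControl

def IsSmallNearDiagonal (a b : ℝ) (ω : ℝ → ℝ → ℝ) : Prop :=
  ∀ ε > 0, ∃ δ > 0, ∀ s t, a ≤ s → s ≤ t → t ≤ b → t - s < δ → ω s t ≤ ε

theorem exists_pos_mul_rpow_lt (c : ℝ) {p ε : ℝ} (hp : 0 < p) (hε : 0 < ε) :
    ∃ e > 0, c * e ^ p < ε := by
  have hlim : Tendsto (fun e : ℝ => c * e ^ p) (𝓝[>] 0) (𝓝 0) := by
    simpa [Real.zero_rpow hp.ne'] using
      ((Real.continuous_rpow_const hp.le).tendsto 0).const_mul c |>.mono_left nhdsWithin_le_nhds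
  obtain ⟨e, he, hlt⟩ := ((hlim.eventually (gt_mem_nhds hε)).and self_mem_nhdsWithin).exists
  exact ⟨e, hlt, he⟩

theorem IsRegularControl.isSmallNearDiagonal {a b : ℝ} {ω : ℝ → ℝ → ℝ}
    (hreg : IsRegularControl a b ω) (hω : IsControl a b ω) :
    IsSmallNearDiagonal a b ω := by
  obtain ⟨r, hr, hcont⟩ := hreg
  intro ε hε
  set K : Set (ℝ × ℝ) := {q | a ≤ q.1 ∧ q.1 ≤ q.2 ∧ q.2 ≤ b ∧ q.2 - q.1 ≤ r / 2}
  have hK : IsCompact K := by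
    refine (isCompact_Icc.prod isCompact_Icc : IsCompact (Icc a b ×ˢ Icc a b)).of_isClosed_subset
      ?_ ?_
    · exact (isClosed_le continuous_const continuous_fst).inter <|
        (isClosed_le continuous_fst continuous_snd).inter <|
        (isClosed_le continuous_snd continuous_const).inter <|
        isClosed_le (continuous_snd.sub continuous_fst) continuous_const
    · rintro ⟨u, v⟩ ⟨h₁, h₂, h₃, -⟩
      exact ⟨⟨h₁, h₂.trans h₃⟩, h₁.trans h₂, h₃⟩
  -- uniform continuity on the compact strip `K` compares `ω s t` with `ω s s = 0`
  obtain ⟨δ, hδ, hunif⟩ := Metric.uniformContinuousOn_iff.1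
    (hK.uniformContinuousOn_of_continuous
      (hcont.mono fun q hq => ⟨hq.1, hq.2.1, hq.2.2.1, by linarith [hq.2.2.2]⟩)) ε hε
  refine ⟨min δ (r / 2), by positivity, fun s t ha hst hb hts => ?_⟩
  have hts' := lt_min_iff.1 hts
  have hdist : dist (s, t) (s, s) < δ := by
    rw [Prod.dist_eq, dist_self, Real.dist_eq, abs_of_nonneg (sub_nonneg.2 hst)]
    exact max_lt hδ hts'.1
  have := hunif (s, t) ⟨ha, hst, hb, hts'.2.le⟩ (s, s) ⟨ha, le_rfl, hst.trans hb, by linarith⟩ hdist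
  rw [hω.diag ha (hst.trans hb), Real.dist_eq, sub_zero] at this
  exact (le_abs_self _).trans this.le

namespace IsSmallNearDiagonal

variable {a b : ℝ} {ω ω₁ ω₂ : ℝ → ℝ → ℝ}

theorem subinterval (h : IsSmallNearDiagonal a b ω) {s t : ℝ} (ha : a ≤ s) (hb : t ≤ b) :
    IsSmallNearDiagonal s t ω := fun ε hε =>
  let ⟨δ, hδ, hsmall⟩ := h ε hε
  ⟨δ, hδ, fun _ _ hs hst ht => hsmall _ _ (ha.trans hs) hst (ht.trans hb)⟩

theorem geomMean (h₂ : IsSmallNearDiagonal a b ω₂) (h₁ : IsControl a b ω₁)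
    (hω₂ : IsControl a b ω₂) {θ : ℝ} (hθ₀ : 0 < θ) (hθ₁ : θ < 1) :
    IsSmallNearDiagonal a b (fun s t => ω₁ s t ^ θ * ω₂ s t ^ (1 - θ)) := by
  intro ε hε
  obtain ⟨e, he, hlt⟩ := exists_pos_mul_rpow_lt (ω₁ a b ^ θ) (sub_pos.2 hθ₁) hε
  obtain ⟨δ, hδ, hsmall⟩ := h₂ e he
  refine ⟨δ, hδ, fun s t ha hst hb hts => ?_⟩
  have := h₁.nonneg ha hst hb
  have := hω₂.nonneg ha hst hb
  have := h₁.nonneg le_rfl (ha.trans (hst.trans hb)) le_rfl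
  calc ω₁ s t ^ θ * ω₂ s t ^ (1 - θ) ≤ ω₁ a b ^ θ * e ^ (1 - θ) := by
        gcongr
        · exact h₁.mono le_rfl ha hst hb le_rfl
        · exact hsmall s t ha hst hb hts
    _ ≤ ε := hlt.le

theorem tendsto_nhdsLT {s t : ℝ} (h : IsSmallNearDiagonal s t ω) (hω : IsControl s t ω)
    (hst : s < t) :
    Tendsto (fun u => ω u t) (𝓝[<] t) (𝓝 0) := by
  refine tendsto_order.2 ⟨fun c hc => ?_, fun c hc => ?_⟩
  · filter_upwards [Ico_mem_nhdsLT hst] with u hu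
    exact hc.trans_le (hω.nonneg hu.1 hu.2.le le_rfl)
  · obtain ⟨δ, hδ, hsmall⟩ := h (c / 2) (half_pos hc)
    filter_upwards [Ioo_mem_nhdsLT (max_lt hst (sub_lt_self t hδ))] with u hu
    have hsu := (le_max_left s (t - δ)).trans hu.1.le
    have htu : t - u < δ := by linarith [le_max_right s (t - δ), hu.1]
    exact (hsmall u t hsu hu.2.le le_rfl htu).trans_lt (half_lt_self hc)

end IsSmallNearDiagonal

/-- Clamping `[y₁, y₂]` into `[x₁, x₂]` and vice versa both give the intersection of the two
intervals, or a single point when they are disjoint. -/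
theorem apply_max_min_comm {X : Type*} [Zero X] (μ : ℝ → ℝ → X) {x₁ x₂ y₁ y₂ : ℝ}
    (hx : x₁ ≤ x₂) (hy : y₁ ≤ y₂) (hμ : ∀ z ∈ ({x₁, x₂, y₁, y₂} : Set ℝ), μ z z = 0) :
    μ (max x₁ (min x₂ y₁)) (max x₁ (min x₂ y₂)) = μ (max y₁ (min y₂ x₁)) (max y₁ (min y₂ x₂)) := by
  rcases le_or_gt y₂ x₁ with h | h
  · rw [min_eq_right (hy.trans (h.trans hx)), max_eq_left (hy.trans h), min_eq_right (h.trans hx),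
      max_eq_left h, min_eq_left h, min_eq_left (h.trans hx), max_eq_right hy,
      hμ x₁ (by simp), hμ y₂ (by simp)]
  rcases le_or_gt x₂ y₁ with h' | h'
  · rw [min_eq_left h', min_eq_left (h'.trans hy), max_eq_right hx,
      min_eq_right (hx.trans (h'.trans hy)), max_eq_left (hx.trans h'), min_eq_right (h'.trans hy),
      max_eq_left h', hμ x₂ (by simp), hμ y₁ (by simp)]
  congr 1 <;> simp only [max_def, min_def] <;> split_ifs <;> linarith

namespace SewPartition

variable {s u t : ℝ}

def riemannSum {E : Type*} [AddCommMonoid E] (P : SewPartition s t) (μ : ℝ → ℝ → E) : E :=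
  ∑ i ∈ Finset.range P.n, μ (P.t i) (P.t (i + 1))

theorem t_le_t (P : SewPartition s t) {i j : ℕ} (hij : i ≤ j) (hj : j ≤ P.n) : P.t i ≤ P.t j := by
  induction j, hij using Nat.le_induction with
  | base => rfl
  | succ j hij ih => exact (ih (by omega)).trans (P.mono j (by omega))

theorem t_mem_Icc (P : SewPartition s t) {i : ℕ} (hi : i ≤ P.n) : P.t i ∈ Icc s t := by
  constructor
  · simpa [P.first] using P.t_le_t (Nat.zero_le i) hi
  · simpa [P.last] using P.t_le_t hi le_rfl

theorem le (P : SewPartition s t) : s ≤ t :=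
  (P.t_mem_Icc le_rfl).1.trans (P.t_mem_Icc le_rfl).2

theorem exists_fine (hst : s ≤ t) {δ : ℝ} (hδ : 0 < δ) : ∃ P : SewPartition s t, P.fine δ := by
  obtain ⟨n, hn⟩ := exists_nat_gt ((t - s) / δ)
  have hn₀ : (0 : ℝ) < n + 1 := by positivity
  have hstep : (t - s) / (n + 1) < δ := by
    rw [div_lt_iff₀ hn₀]
    rw [div_lt_iff₀ hδ] at hn
    nlinarith
  refine ⟨⟨n + 1, fun i => s + i * ((t - s) / (n + 1)), n.succ_pos, by simp, ?_, fun i _ => ?_⟩,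
    fun i _ => ?_⟩
  · push_cast
    field_simp
    ring
  · have : 0 ≤ (t - s) / (n + 1) := div_nonneg (sub_nonneg.2 hst) hn₀.le
    push_cast
    nlinarith
  · push_cast
    linarith

def concat (P : SewPartition s u) (Q : SewPartition u t) : SewPartition s t where
  n := P.n + Q.n
  t i := if i ≤ P.n then P.t i else Q.t (i - P.n)
  npos := Nat.add_pos_left P.npos _
  first := by simp [P.first]
  last := by
    rcases Nat.eq_zero_or_pos Q.n with h | h
    · simp [h, P.last, ← Q.first, ← Q.last]
    · simp [show ¬ P.n + Q.n ≤ P.n by omega, Q.last]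
  mono i hi := by
    rcases lt_trichotomy (i + 1) (P.n + 1) with h | h | h
    · simp only [show i ≤ P.n by omega, show i + 1 ≤ P.n by omega, if_true]
      exact P.mono i (by omega)
    · obtain rfl : i = P.n := by omega
      simpa [P.last, ← Q.first] using Q.mono 0 (by omega)
    · simp only [show ¬ i ≤ P.n by omega, show ¬ i + 1 ≤ P.n by omega, if_false,
        show i + 1 - P.n = i - P.n + 1 by omega]
      exact Q.mono _ (by omega)

theorem concat_t_of_le (P : SewPartition s u) (Q : SewPartition u t) {i : ℕ} (hi : i ≤ P.n) :
    (P.concat Q).t i = P.t i :=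
  if_pos hi

theorem concat_t_add (P : SewPartition s u) (Q : SewPartition u t) (i : ℕ) :
    (P.concat Q).t (P.n + i) = Q.t i := by
  rcases Nat.eq_zero_or_pos i with rfl | hi
  · simp [concat_t_of_le, P.last, Q.first]
  · simp [concat, show ¬ P.n + i ≤ P.n by omega]

theorem concat_fine (P : SewPartition s u) (Q : SewPartition u t) {δ : ℝ} (hP : P.fine δ)
    (hQ : Q.fine δ) : (P.concat Q).fine δ := by
  intro i hi
  rcases Nat.lt_or_ge i P.n with h | h
  · rw [concat_t_of_le _ _ h, concat_t_of_le _ _ h.le]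
    exact hP i h
  · obtain ⟨k, rfl⟩ := Nat.exists_eq_add_of_le h
    rw [add_assoc, concat_t_add, concat_t_add]
    exact hQ k (by simp [concat] at hi; omega)

theorem riemannSum_concat {E : Type*} [AddCommMonoid E] (P : SewPartition s u)
    (Q : SewPartition u t) (μ : ℝ → ℝ → E) :
    (P.concat Q).riemannSum μ = P.riemannSum μ + Q.riemannSum μ := by
  rw [riemannSum, show (P.concat Q).n = P.n + Q.n from rfl, Finset.sum_range_add]
  congr 1
  · refine Finset.sum_congr rfl fun i hi => ?_
    rw [concat_t_of_le _ _ (by simp at hi; omega), concat_t_of_le _ _ (by simp at hi; omega)]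
  · simp only [add_assoc, concat_t_add]
    rfl

def restrict (Q : SewPartition s t) {x y : ℝ} (hsx : s ≤ x) (hxy : x ≤ y) (hyt : y ≤ t) :
    SewPartition x y where
  n := Q.n
  t j := max x (min y (Q.t j))
  npos := Q.npos
  first := by rw [Q.first, min_eq_right (hsx.trans hxy), max_eq_left hsx]
  last := by rw [Q.last, min_eq_left hyt, max_eq_right hxy]
  mono j hj := max_le_max le_rfl (min_le_min le_rfl (Q.mono j hj))

def erase (P : SewPartition s t) (j : ℕ) (hj : j + 2 ≤ P.n) : SewPartition s t where
  n := P.n - 1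
  t i := if i ≤ j then P.t i else P.t (i + 1)
  npos := by omega
  first := by simp [P.first]
  last := by simp [show ¬ P.n - 1 ≤ j by omega, show P.n - 1 + 1 = P.n by omega, P.last]
  mono i hi := by
    rcases lt_trichotomy i j with h | rfl | h
    · simp only [h.le, show i + 1 ≤ j by omega, if_true]
      exact P.mono i (by omega)
    · simpa using P.t_le_t (Nat.le_succ_of_le (Nat.le_succ i)) hj
    · simp only [show ¬ i ≤ j by omega, show ¬ i + 1 ≤ j by omega, if_false]
      exact P.mono (i + 1) (by omega)

theorem riemannSum_erase {E : Type*} [AddCommGroup E] (P : SewPartition s t) (j : ℕ)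
    (hj : j + 2 ≤ P.n) (μ : ℝ → ℝ → E) :
    P.riemannSum μ = (P.erase j hj).riemannSum μ -
      (μ (P.t j) (P.t (j + 2)) - μ (P.t j) (P.t (j + 1)) - μ (P.t (j + 1)) (P.t (j + 2))) := by
  obtain ⟨k, hk⟩ := Nat.exists_eq_add_of_le hj
  have hn : (P.erase j hj).n = j + 1 + k := by simp only [erase]; omega
  simp only [riemannSum, hn, hk, Finset.sum_range_add, Finset.sum_range_succ]
  have hlow : ∑ i ∈ Finset.range j, μ ((P.erase j hj).t i) ((P.erase j hj).t (i + 1)) =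
      ∑ i ∈ Finset.range j, μ (P.t i) (P.t (i + 1)) :=
    Finset.sum_congr rfl fun i hi => by
      simp [erase, show i ≤ j by simp at hi; omega, show i + 1 ≤ j by simp at hi; omega]
  have hhigh : ∑ i ∈ Finset.range k,
      μ ((P.erase j hj).t (j + 1 + i)) ((P.erase j hj).t (j + 1 + i + 1)) =
      ∑ i ∈ Finset.range k, μ (P.t (j + 2 + i)) (P.t (j + 2 + i + 1)) :=
    Finset.sum_congr rfl fun i _ => by
      simp only [erase, show ¬ j + 1 + i ≤ j by omega, show ¬ j + 1 + i + 1 ≤ j by omega,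
        if_false]
      ring_nf
  have hmid : μ ((P.erase j hj).t j) ((P.erase j hj).t (j + 1)) = μ (P.t j) (P.t (j + 2)) := by
    simp [erase]
  rw [hlow, hhigh, hmid]
  abel

/-- The Riemann sum of `μ` over the common refinement of `P` and `Q`, grouped along `P`. -/
def refinementSum {E : Type*} [AddCommMonoid E] (P Q : SewPartition s t) (μ : ℝ → ℝ → E) : E :=
  ∑ i ∈ Finset.range P.n, ∑ j ∈ Finset.range Q.n,
    μ (max (P.t i) (min (P.t (i + 1)) (Q.t j))) (max (P.t i) (min (P.t (i + 1)) (Q.t (j + 1))))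

theorem refinementSum_comm {E : Type*} [AddCommMonoid E] (P Q : SewPartition s t)
    {μ : ℝ → ℝ → E} (hμ : ∀ z ∈ Icc s t, μ z z = 0) :
    P.refinementSum Q μ = Q.refinementSum P μ := by
  rw [refinementSum, refinementSum, Finset.sum_comm]
  refine Finset.sum_congr rfl fun j hj => Finset.sum_congr rfl fun i hi => ?_
  simp only [Finset.mem_range] at hi hj
  exact apply_max_min_comm μ (P.mono i hi) (Q.mono j hj) (by
    rintro z (rfl | rfl | rfl | rfl)
    exacts [hμ _ (P.t_mem_Icc hi.le), hμ _ (P.t_mem_Icc hi), hμ _ (Q.t_mem_Icc hj.le),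
      hμ _ (Q.t_mem_Icc hj)])

def fineFilter (s t : ℝ) : Filter (SewPartition s t) :=
  ⨅ δ > 0, 𝓟 {P | P.fine δ}

theorem hasBasis_fineFilter :
    (fineFilter s t).HasBasis (fun δ : ℝ => 0 < δ) fun δ => {P | P.fine δ} :=
  hasBasis_biInf_principal'
    (fun δ hδ δ' hδ' => ⟨min δ δ', lt_min hδ hδ',
      fun _ hP i hi => (hP i hi).trans_le (min_le_left _ _),
      fun _ hP i hi => (hP i hi).trans_le (min_le_right _ _)⟩)
    ⟨1, one_pos⟩

theorem neBot_fineFilter (hst : s ≤ t) : (fineFilter s t).NeBot :=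
  hasBasis_fineFilter.neBot_iff.2 fun hδ => exists_fine hst hδ

theorem tendsto_concat_fineFilter :
    Tendsto (fun PQ : SewPartition s u × SewPartition u t => PQ.1.concat PQ.2)
      (fineFilter s u ×ˢ fineFilter u t) (fineFilter s t) :=
  (hasBasis_fineFilter.prod hasBasis_fineFilter).tendsto_iff hasBasis_fineFilter |>.2
    fun δ hδ => ⟨(δ, δ), ⟨hδ, hδ⟩, fun _ hPQ => concat_fine _ _ hPQ.1 hPQ.2⟩

end SewPartition

def HasControlledDefect {E : Type*} [NormedAddCommGroup E] (a b : ℝ) (μ : ℝ → ℝ → E)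
    (ω : ℝ → ℝ → ℝ) (γ : ℝ) : Prop :=
  ∀ s u t, a ≤ s → s ≤ u → u ≤ t → t ≤ b → ‖μ s t - μ s u - μ u t‖ ≤ ω s t ^ γ

section Sewing

open SewPartition

variable {E : Type*} [NormedAddCommGroup E] {a b s t γ : ℝ} {ω : ℝ → ℝ → ℝ} {μ : ℝ → ℝ → E}

theorem HasControlledDefect.subinterval (h : HasControlledDefect a b μ ω γ) (ha : a ≤ s)
    (hb : t ≤ b) : HasControlledDefect s t μ ω γ :=
  fun _ _ _ hs hsu hut ht => h _ _ _ (ha.trans hs) hsu hut (ht.trans hb)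

theorem HasControlledDefect.apply_self (h : HasControlledDefect a b μ ω γ)
    (hω : IsControl a b ω) (hγ : γ ≠ 0) {s : ℝ} (ha : a ≤ s) (hb : s ≤ b) : μ s s = 0 := by
  simpa [hω.diag ha hb, Real.zero_rpow hγ] using h s s s ha le_rfl le_rfl hb

theorem IsControl.riemannSum_le (hω : IsControl s t ω) (P : SewPartition s t) :
    P.riemannSum ω ≤ ω s t := by
  have hpartial : ∀ m ≤ P.n, ∑ i ∈ Finset.range m, ω (P.t i) (P.t (i + 1)) ≤ ω s (P.t m) := by
    intro m hm
    induction m with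
    | zero => simp [P.first, hω.diag le_rfl P.le]
    | succ m ih =>
      rw [Finset.sum_range_succ]
      have hm' := P.t_mem_Icc (Nat.le_of_succ_le hm)
      exact (add_le_add_left (ih (by omega)) _).trans
        (hω.add_le le_rfl hm'.1 (P.mono m hm) (P.t_mem_Icc hm).2)
  have := hpartial P.n le_rfl
  rwa [P.last] at this

theorem IsControl.sum_skip_le (hω : IsControl s t ω) (P : SewPartition s t) (m : ℕ)
    (hm : m + 1 ≤ P.n) :
    ∑ j ∈ Finset.range m, ω (P.t j) (P.t (j + 2)) ≤ ω s (P.t (m + 1)) + ω s (P.t m) := by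
  induction m with
  | zero =>
    have h₁ := P.t_mem_Icc hm
    simpa [P.first, hω.diag le_rfl P.le] using hω.nonneg le_rfl h₁.1 h₁.2
  | succ m ih =>
    rw [Finset.sum_range_succ]
    have hm₀ := P.t_mem_Icc (show m ≤ P.n by omega)
    have hm₂ := P.t_mem_Icc hm
    have := ih (by omega)
    have := hω.add_le le_rfl hm₀.1 (P.t_le_t (by omega) hm) hm₂.2
    linarith

theorem IsControl.exists_skip_le (hω : IsControl s t ω) (P : SewPartition s t) {m : ℕ}
    (hm : P.n = m + 2) : ∃ j < m + 1, ω (P.t j) (P.t (j + 2)) ≤ 2 / (m + 1) * ω s t := by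
  have hsum : ∑ j ∈ Finset.range (m + 1), ω (P.t j) (P.t (j + 2)) ≤
      ∑ _j ∈ Finset.range (m + 1), 2 / (m + 1) * ω s t := by
    have hm₁ := P.t_mem_Icc (show m + 1 ≤ P.n by omega)
    have hskip := hω.sum_skip_le P (m + 1) (by omega)
    rw [show m + 1 + 1 = P.n by omega, P.last] at hskip
    have := hω.mono le_rfl le_rfl hm₁.1 hm₁.2 le_rfl
    have hconst : ((m + 1 : ℕ) : ℝ) * (2 / (m + 1) * ω s t) = 2 * ω s t := by
      push_cast
      field_simp
    rw [Finset.sum_const, Finset.card_range, nsmul_eq_mul, hconst]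
    linarith
  simpa using Finset.exists_le_of_sum_le (by simp) hsum

/-- Young's maximal inequality: remove, one at a time, a point `t_{j+1}` for which
`ω(t_j, t_{j+2}) ≤ 2 ω(s, t) / (n - 1)`; such a point exists by `IsControl.exists_skip_le`. -/
theorem norm_riemannSum_sub_le_sum (hω : IsControl s t ω) (hγ : 0 < γ)
    (hμ : HasControlledDefect s t μ ω γ) (m : ℕ) (P : SewPartition s t) (hP : P.n = m + 1) :
    ‖P.riemannSum μ - μ s t‖ ≤
      (∑ k ∈ Finset.range m, (2 / (k + 1 : ℝ)) ^ γ) * ω s t ^ γ := by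
  induction m generalizing P with
  | zero =>
    have hlast := P.last
    rw [hP] at hlast
    simp [riemannSum, hP, P.first, hlast]
  | succ m ih =>
    obtain ⟨j, hj, hskip⟩ := hω.exists_skip_le P hP
    have hj₂ : j + 2 ≤ P.n := by omega
    have hP' : (P.erase j hj₂).n = m + 1 := by simp only [erase]; omega
    have hjmem := P.t_mem_Icc (show j ≤ P.n by omega)
    have hj₂mem := P.t_mem_Icc hj₂
    have hdefect := hμ (P.t j) (P.t (j + 1)) (P.t (j + 2)) hjmem.1 (P.mono j (by omega))
      (P.mono (j + 1) (by omega)) hj₂mem.2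
    have hω₀ := hω.nonneg hjmem.1 (P.t_le_t (by omega) hj₂) hj₂mem.2
    have hωst := hω.nonneg le_rfl P.le le_rfl
    rw [P.riemannSum_erase j hj₂, sub_right_comm]
    calc _ ≤ ‖(P.erase j hj₂).riemannSum μ - μ s t‖ +
          ‖μ (P.t j) (P.t (j + 2)) - μ (P.t j) (P.t (j + 1)) - μ (P.t (j + 1)) (P.t (j + 2))‖ :=
          norm_sub_le _ _
      _ ≤ (∑ k ∈ Finset.range m, (2 / (k + 1 : ℝ)) ^ γ) * ω s t ^ γ +
          (2 / (m + 1) * ω s t) ^ γ :=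
          add_le_add (ih _ hP') (hdefect.trans (by gcongr))
      _ = _ := by
          rw [Real.mul_rpow (by positivity) hωst, Finset.sum_range_succ]
          ring

theorem summable_two_div_rpow (hγ : 1 < γ) :
    Summable fun k : ℕ => (2 / (k + 1 : ℝ)) ^ γ := by
  have h := (summable_nat_add_iff 1).2 (Real.summable_one_div_nat_rpow.2 hγ)
  refine (h.mul_left (2 ^ γ)).congr fun k => ?_
  rw [Real.div_rpow zero_le_two (by positivity)]
  push_cast
  ring

variable (γ) in
noncomputable def sewingConst : ℝ :=
  ∑' k : ℕ, (2 / (k + 1 : ℝ)) ^ γ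

theorem sewingConst_pos (hγ : 1 < γ) : 0 < sewingConst γ :=
  (summable_two_div_rpow hγ).tsum_pos (fun _ => by positivity) 0 (by positivity)

theorem norm_riemannSum_sub_le (hω : IsControl s t ω) (hγ : 1 < γ)
    (hμ : HasControlledDefect s t μ ω γ) (P : SewPartition s t) :
    ‖P.riemannSum μ - μ s t‖ ≤ sewingConst γ * ω s t ^ γ := by
  obtain ⟨m, hm⟩ := Nat.exists_eq_add_of_lt P.npos
  refine (norm_riemannSum_sub_le_sum hω (by linarith) hμ m P (by omega)).trans ?_
  have := hω.nonneg le_rfl P.le le_rfl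
  gcongr
  exact (summable_two_div_rpow hγ).sum_le_tsum _ fun _ _ => by positivity

end Sewing

theorem Real.rpow_le_rpow_sub_one_mul {x e γ : ℝ} (hx : 0 ≤ x) (hxe : x ≤ e) (hγ : 1 ≤ γ) :
    x ^ γ ≤ e ^ (γ - 1) * x :=
  calc x ^ γ = x ^ (γ - 1) * x := by
        rw [← Real.rpow_add_one' hx (by linarith), sub_add_cancel]
    _ ≤ e ^ (γ - 1) * x :=
        mul_le_mul_of_nonneg_right (Real.rpow_le_rpow hx hxe (by linarith)) hx

section SewingLimit

open SewPartition

variable {E : Type*} [NormedAddCommGroup E] {s u t γ : ℝ} {ω : ℝ → ℝ → ℝ} {μ : ℝ → ℝ → E}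

theorem norm_refinementSum_sub_le (hω : IsControl s t ω) (hγ : 1 < γ)
    (hμ : HasControlledDefect s t μ ω γ) (P Q : SewPartition s t) {e : ℝ}
    (he : ∀ i < P.n, ω (P.t i) (P.t (i + 1)) ≤ e) :
    ‖P.refinementSum Q μ - P.riemannSum μ‖ ≤ sewingConst γ * e ^ (γ - 1) * ω s t := by
  have he₀ : 0 ≤ e := (hω.nonneg (P.t_mem_Icc (Nat.zero_le _)).1 (P.mono 0 P.npos)
    (P.t_mem_Icc P.npos).2).trans (he 0 P.npos)
  have hK := (sewingConst_pos hγ).le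
  rw [refinementSum, riemannSum, ← Finset.sum_sub_distrib]
  refine (norm_sum_le _ _).trans ?_
  calc _ ≤ ∑ i ∈ Finset.range P.n, sewingConst γ * e ^ (γ - 1) * ω (P.t i) (P.t (i + 1)) := by
        refine Finset.sum_le_sum fun i hi => ?_
        rw [Finset.mem_range] at hi
        have hi₀ := P.t_mem_Icc hi.le
        have hi₁ := P.t_mem_Icc hi
        -- the inner sum is the Riemann sum of `Q` clamped into `[P.t i, P.t (i + 1)]`
        have h := norm_riemannSum_sub_le (hω.subinterval hi₀.1 hi₁.2) hγ
          (hμ.subinterval hi₀.1 hi₁.2) (Q.restrict hi₀.1 (P.mono i hi) hi₁.2)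
        rw [mul_assoc]
        exact h.trans (mul_le_mul_of_nonneg_left (Real.rpow_le_rpow_sub_one_mul
          (hω.nonneg hi₀.1 (P.mono i hi) hi₁.2) (he i hi) hγ.le) hK)
    _ = sewingConst γ * e ^ (γ - 1) * P.riemannSum ω := by rw [riemannSum, Finset.mul_sum]
    _ ≤ sewingConst γ * e ^ (γ - 1) * ω s t := by
        gcongr
        exact hω.riemannSum_le P

theorem norm_riemannSum_sub_riemannSum_le (hω : IsControl s t ω) (hγ : 1 < γ)
    (hμ : HasControlledDefect s t μ ω γ) (P Q : SewPartition s t) {e : ℝ}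
    (hP : ∀ i < P.n, ω (P.t i) (P.t (i + 1)) ≤ e) (hQ : ∀ j < Q.n, ω (Q.t j) (Q.t (j + 1)) ≤ e) :
    ‖P.riemannSum μ - Q.riemannSum μ‖ ≤ 2 * sewingConst γ * e ^ (γ - 1) * ω s t := by
  have hdiag : ∀ z ∈ Icc s t, μ z z = 0 := fun z hz =>
    hμ.apply_self hω (by linarith) hz.1 hz.2
  have hPQ := norm_refinementSum_sub_le hω hγ hμ P Q hP
  have hQP := norm_refinementSum_sub_le hω hγ hμ Q P hQ
  rw [refinementSum_comm P Q hdiag] at hPQ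
  rw [← sub_sub_sub_cancel_left (Q.riemannSum μ) (P.riemannSum μ) (Q.refinementSum P μ)]
  linarith [norm_sub_le (Q.refinementSum P μ - Q.riemannSum μ)
    (Q.refinementSum P μ - P.riemannSum μ)]

theorem cauchy_map_riemannSum (hω : IsControl s t ω) (hsmall : IsSmallNearDiagonal s t ω)
    (hγ : 1 < γ) (hμ : HasControlledDefect s t μ ω γ) (hst : s ≤ t) :
    Cauchy (map (·.riemannSum μ) (fineFilter s t)) := by
  have := neBot_fineFilter hst
  rw [cauchy_map_iff', hasBasis_fineFilter.prod_self.tendsto_iff Metric.uniformity_basis_dist]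
  intro ε hε
  obtain ⟨e, he, hlt⟩ := exists_pos_mul_rpow_lt (2 * sewingConst γ * ω s t) (sub_pos.2 hγ) hε
  obtain ⟨δ, hδ, hδe⟩ := hsmall e he
  have hfine : ∀ P : SewPartition s t, P.fine δ → ∀ i < P.n, ω (P.t i) (P.t (i + 1)) ≤ e :=
    fun P hP i hi => hδe _ _ (P.t_mem_Icc hi.le).1 (P.mono i hi) (P.t_mem_Icc hi).2 (hP i hi)
  refine ⟨δ, hδ, fun PQ hPQ => ?_⟩
  rw [mem_ofPred_eq, dist_eq_norm]
  refine (norm_riemannSum_sub_riemannSum_le hω hγ hμ _ _ (hfine _ hPQ.1)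
    (hfine _ hPQ.2)).trans_lt ?_
  linarith

noncomputable def sewingMap (μ : ℝ → ℝ → E) (s t : ℝ) : E :=
  limUnder (fineFilter s t) (·.riemannSum μ)

variable [CompleteSpace E]

theorem tendsto_sewingMap (hω : IsControl s t ω) (hsmall : IsSmallNearDiagonal s t ω)
    (hγ : 1 < γ) (hμ : HasControlledDefect s t μ ω γ) (hst : s ≤ t) :
    Tendsto (·.riemannSum μ) (fineFilter s t) (𝓝 (sewingMap μ s t)) :=
  have := neBot_fineFilter hst
  tendsto_nhds_limUnder <|
    cauchy_map_iff_exists_tendsto.1 (cauchy_map_riemannSum hω hsmall hγ hμ hst)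

theorem norm_sewingMap_sub_le (hω : IsControl s t ω) (hsmall : IsSmallNearDiagonal s t ω)
    (hγ : 1 < γ) (hμ : HasControlledDefect s t μ ω γ) (hst : s ≤ t) :
    ‖sewingMap μ s t - μ s t‖ ≤ sewingConst γ * ω s t ^ γ :=
  have := neBot_fineFilter hst
  le_of_tendsto ((tendsto_sewingMap hω hsmall hγ hμ hst).sub_const (μ s t)).norm
    (Eventually.of_forall (norm_riemannSum_sub_le hω hγ hμ))

theorem sewingMap_add (hω : IsControl s t ω) (hsmall : IsSmallNearDiagonal s t ω)
    (hγ : 1 < γ) (hμ : HasControlledDefect s t μ ω γ) (hsu : s ≤ u) (hut : u ≤ t) :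
    sewingMap μ s t = sewingMap μ s u + sewingMap μ u t := by
  have := neBot_fineFilter hsu
  have := neBot_fineFilter hut
  have hleft := tendsto_sewingMap (hω.subinterval le_rfl hut) (hsmall.subinterval le_rfl hut) hγ
    (hμ.subinterval le_rfl hut) hsu
  have hright := tendsto_sewingMap (hω.subinterval hsu le_rfl) (hsmall.subinterval hsu le_rfl) hγ
    (hμ.subinterval hsu le_rfl) hut
  refine tendsto_nhds_unique ((tendsto_sewingMap hω hsmall hγ hμ (hsu.trans hut)).comp
    (tendsto_concat_fineFilter (u := u))) ?_
  simpa only [Function.comp_def, riemannSum_concat] using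
    (hleft.comp tendsto_fst).add (hright.comp tendsto_snd)

end SewingLimit

/-- Splitting `[s, t]` at `u` close to `t` replaces `ω₁ s t` by its left limit `ω₁ (s, t⁻)`:
the error on `[u, t]` and the defect at `u` vanish with `ω₂ u t`. -/
theorem norm_sub_le_sSup_of_add {E : Type*} [NormedAddCommGroup E] {s t α₁ α₂ K : ℝ}
    {μ I : ℝ → ℝ → E} {ω₁ ω₂ : ℝ → ℝ → ℝ} (hω₁ : IsControl s t ω₁) (hω₂ : IsControl s t ω₂)
    (hsmall : IsSmallNearDiagonal s t ω₂) (h₁ : 0 < α₁) (h₂ : 0 < α₂) (hK : 0 ≤ K)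
    (hst : s ≤ t) (hμ : ∀ u ∈ Icc s t, ‖μ s t - μ s u - μ u t‖ ≤ ω₁ s u ^ α₁ * ω₂ u t ^ α₂)
    (hI : ∀ x y, s ≤ x → x ≤ y → y ≤ t → ‖I x y - μ x y‖ ≤ K * ω₁ x y ^ α₁ * ω₂ x y ^ α₂)
    (hadd : ∀ u ∈ Icc s t, I s t = I s u + I u t) :
    ‖I s t - μ s t‖ ≤ K * sSup (ω₁ s '' Ico s t) ^ α₁ * ω₂ s t ^ α₂ := by
  rcases hst.eq_or_lt with rfl | hst
  · simpa [hω₁.diag le_rfl le_rfl, Real.zero_rpow h₁.ne'] using hI s s le_rfl le_rfl le_rfl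
  set σ := sSup (ω₁ s '' Ico s t)
  have hσ : ∀ u ∈ Ico s t, ω₁ s u ≤ σ := fun u hu =>
    le_csSup ⟨ω₁ s t, by rintro _ ⟨v, hv, rfl⟩; exact hω₁.mono le_rfl le_rfl hv.1 hv.2.le le_rfl⟩
      ⟨u, hu, rfl⟩
  have hσ₀ : 0 ≤ σ := (hω₁.nonneg le_rfl le_rfl hst.le).trans (hσ s ⟨le_rfl, hst⟩)
  have hst₁ := hω₁.nonneg le_rfl hst.le le_rfl
  have hsplit : ∀ u ∈ Ico s t, ‖I s t - μ s t‖ ≤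
      K * σ ^ α₁ * ω₂ s t ^ α₂ + (K * ω₁ s t ^ α₁ + σ ^ α₁) * ω₂ u t ^ α₂ := by
    intro u hu
    have hsu₁ := hω₁.nonneg le_rfl hu.1 hu.2.le
    have hsu₂ := hω₂.nonneg le_rfl hu.1 hu.2.le
    have hut₁ := hω₁.nonneg hu.1 hu.2.le le_rfl
    have hut₂ := hω₂.nonneg hu.1 hu.2.le le_rfl
    rw [hadd u (Ico_subset_Icc_self hu)]
    calc ‖I s u + I u t - μ s t‖
        = ‖(I s u - μ s u) + (I u t - μ u t) - (μ s t - μ s u - μ u t)‖ := by congr 1; abel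
      _ ≤ ‖I s u - μ s u‖ + ‖I u t - μ u t‖ + ‖μ s t - μ s u - μ u t‖ :=
          norm_sub_le_of_le (norm_add_le _ _) le_rfl
      _ ≤ K * ω₁ s u ^ α₁ * ω₂ s u ^ α₂ + K * ω₁ u t ^ α₁ * ω₂ u t ^ α₂ +
          ω₁ s u ^ α₁ * ω₂ u t ^ α₂ :=
          add_le_add (add_le_add (hI s u le_rfl hu.1 hu.2.le) (hI u t hu.1 hu.2.le le_rfl))
            (hμ u (Ico_subset_Icc_self hu))
      _ ≤ K * σ ^ α₁ * ω₂ s t ^ α₂ + K * ω₁ s t ^ α₁ * ω₂ u t ^ α₂ + σ ^ α₁ * ω₂ u t ^ α₂ := by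
          gcongr
          · exact hσ u hu
          · exact hω₂.mono le_rfl le_rfl hu.1 hu.2.le le_rfl
          · exact hω₁.mono le_rfl hu.1 hu.2.le le_rfl le_rfl
          · exact hσ u hu
      _ = _ := by ring
  have hlim : Tendsto (fun u => K * σ ^ α₁ * ω₂ s t ^ α₂ + (K * ω₁ s t ^ α₁ + σ ^ α₁) *
      ω₂ u t ^ α₂) (𝓝[<] t) (𝓝 (K * σ ^ α₁ * ω₂ s t ^ α₂)) := by
    simpa [Real.zero_rpow h₂.ne'] using tendsto_const_nhds.add (tendsto_const_nhds.mul
      ((hsmall.tendsto_nhdsLT hω₂ hst).rpow_const (Or.inr h₂.le)))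
  exact ge_of_tendsto hlim (eventually_of_mem (Ico_mem_nhdsLT hst) hsplit)

/-- The witness is `ω = ω₁^θ ω₂^(1-θ)` with `θ = α₁ / (α₁ + α₂)`, a control by Hölder's
inequality. -/
theorem exists_control_of_mul_rpow {E : Type*} [NormedAddCommGroup E] {a b α₁ α₂ : ℝ}
    {μ : ℝ → ℝ → E} {ω₁ ω₂ : ℝ → ℝ → ℝ} (hω₁ : IsControl a b ω₁) (hω₂ : IsControl a b ω₂)
    (hsmall : IsSmallNearDiagonal a b ω₂) (h₁ : 0 < α₁) (h₂ : 0 < α₂)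
    (hμ : ∀ s u t, a ≤ s → s ≤ u → u ≤ t → t ≤ b →
      ‖μ s t - μ s u - μ u t‖ ≤ ω₁ s u ^ α₁ * ω₂ u t ^ α₂) :
    ∃ ω : ℝ → ℝ → ℝ, IsControl a b ω ∧ IsSmallNearDiagonal a b ω ∧
      HasControlledDefect a b μ ω (α₁ + α₂) ∧
      ∀ s t, a ≤ s → s ≤ t → t ≤ b → ω s t ^ (α₁ + α₂) = ω₁ s t ^ α₁ * ω₂ s t ^ α₂ := by
  set θ := α₁ / (α₁ + α₂)
  have hθ₀ : 0 < θ := by positivity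
  have hθ₁ : θ < 1 := (div_lt_one (by positivity)).2 (by linarith)
  have hθα : θ * (α₁ + α₂) = α₁ := div_mul_cancel₀ _ (by positivity)
  have hpow : ∀ s t, a ≤ s → s ≤ t → t ≤ b →
      (ω₁ s t ^ θ * ω₂ s t ^ (1 - θ)) ^ (α₁ + α₂) = ω₁ s t ^ α₁ * ω₂ s t ^ α₂ := by
    intro s t ha hst hb
    have := hω₁.nonneg ha hst hb
    have := hω₂.nonneg ha hst hb
    rw [Real.mul_rpow (by positivity) (by positivity), ← Real.rpow_mul (by positivity),
      ← Real.rpow_mul (by positivity), hθα,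
      show (1 - θ) * (α₁ + α₂) = α₂ by linear_combination -hθα]
  refine ⟨_, hω₁.geomMean hω₂ hθ₀ hθ₁, hsmall.geomMean hω₁ hω₂ hθ₀ hθ₁,
    fun s u t ha hsu hut hb => ?_, hpow⟩
  have := hω₁.nonneg ha hsu (hut.trans hb)
  have := hω₂.nonneg (ha.trans hsu) hut hb
  have := hω₁.nonneg ha (hsu.trans hut) hb
  rw [hpow s t ha (hsu.trans hut) hb]
  refine (hμ s u t ha hsu hut hb).trans ?_
  gcongr
  · exact hω₁.mono ha le_rfl hsu hut hb
  · exact hω₂.mono ha hsu hut le_rfl hb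

/-- **Sewing lemma (Proposition A.1, after Friz–Zhang).**
Let `μ : Δ_{a,b} → ℝ^d` satisfy `|μ_{s,t} - μ_{s,u} - μ_{u,t}| ≤ ω₁(s,u)^{α₁} ω₂(u,t)^{α₂}`
for controls `ω₁, ω₂` with `ω₂` regular and exponents `α₁ + α₂ > 1`.  Then for every
`[s,t] ⊆ [a,b]` the Riemann sums `μ_π` converge, as the mesh of `π` tends to `0`, to a
limit `I_s^t(μ)` with `|I_s^t(μ) - μ_{s,t}| ≤ C ω₁(s,t⁻)^{α₁} ω₂(s,t)^{α₂}`, for a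
constant `C` depending only on `α₁, α₂`; here `ω₁(s,t⁻) = sup_{u ∈ [s,t)} ω₁(s,u)` is
the left limit in `t` of `ω₁(s, ·)`. -/
theorem sewing_lemma_with_controls
    (α₁ α₂ : ℝ) (h₁ : 0 < α₁) (h₂ : 0 < α₂) (hsum : 1 < α₁ + α₂) :
    ∃ C : ℝ, 0 < C ∧
      ∀ (d : ℕ) (a b : ℝ), a ≤ b →
      ∀ (μ : ℝ → ℝ → Euc d) (ω₁ ω₂ : ℝ → ℝ → ℝ),
        IsControl a b ω₁ → IsControl a b ω₂ → IsRegularControl a b ω₂ →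
        (∀ s u t : ℝ, a ≤ s → s ≤ u → u ≤ t → t ≤ b →
          ‖μ s t - μ s u - μ u t‖ ≤ ω₁ s u ^ α₁ * ω₂ u t ^ α₂) →
        ∀ s t : ℝ, a ≤ s → s ≤ t → t ≤ b →
          ∃ I : Euc d,
            (∀ ε > 0, ∃ δ > 0, ∀ P : SewPartition s t, P.fine δ →
              ‖(∑ i ∈ Finset.range P.n, μ (P.t i) (P.t (i + 1))) - I‖ < ε) ∧
            ‖I - μ s t‖ ≤ C * sSup (ω₁ s '' Ico s t) ^ α₁ * ω₂ s t ^ α₂ := by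
  refine ⟨sewingConst (α₁ + α₂), sewingConst_pos hsum, ?_⟩
  intro d a b _ μ ω₁ ω₂ hω₁ hω₂ hreg hμ s t has hst htb
  have hω₁' := hω₁.subinterval has htb
  have hω₂' := hω₂.subinterval has htb
  have hsmall₂ := (hreg.isSmallNearDiagonal hω₂).subinterval has htb
  have hμ' : ∀ x u y, s ≤ x → x ≤ u → u ≤ y → y ≤ t →
      ‖μ x y - μ x u - μ u y‖ ≤ ω₁ x u ^ α₁ * ω₂ u y ^ α₂ :=
    fun x u y hx hxu huy hy => hμ x u y (has.trans hx) hxu huy (hy.trans htb)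
  obtain ⟨ω, hω, hsmall, hdefect, hωpow⟩ :=
    exists_control_of_mul_rpow hω₁' hω₂' hsmall₂ h₁ h₂ hμ'
  refine ⟨sewingMap μ s t, fun ε hε => ?_, ?_⟩
  · obtain ⟨δ, hδ, hδε⟩ := (SewPartition.hasBasis_fineFilter.tendsto_iff Metric.nhds_basis_ball).1
      (tendsto_sewingMap hω hsmall hsum hdefect hst) ε hε
    exact ⟨δ, hδ, fun P hP => by simpa [dist_eq_norm, SewPartition.riemannSum] using hδε P hP⟩
  refine norm_sub_le_sSup_of_add hω₁' hω₂' hsmall₂ h₁ h₂ (sewingConst_pos hsum).le hst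
    (fun u hu => hμ' s u t le_rfl hu.1 hu.2 le_rfl) (fun x y hx hxy hy => ?_)
    (fun u hu => sewingMap_add hω hsmall hsum hdefect hu.1 hu.2)
  rw [mul_assoc, ← hωpow x y hx hxy hy]
  exact norm_sewingMap_sub_le (hω.subinterval hx hy) (hsmall.subinterval hx hy) hsum
    (hdefect.subinterval hx hy) hxy
end
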